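/- arXiv:2503.05289 — 3 statements merged into one kernel-verified Lean document; each statement's English description precedes it below -/
import Mathlib

section
/- Consider the quadratic program: minimize Σ_{y=1}^c α_yᵀ K̄ α_y over α_1,…,α_c ∈ R^c, subject to (α_y/δ_y − α_k/δ_k)ᵀ (K̄ e_y)/N_y ≥ 1 for all y ∈ [c] and k ≠ y, where K̄ = diag(N_1² ξ_1,…,N_c² ξ_c) with ξ_i, N_i, δ_i > 0. Then the optimal solution is α_{y,i} = (δ_i/(N_i ξ_i))(1{i=y} − δ_y δ_i / Δ) where Δ = Σ_{j=1}^c δ_j². -/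
open Finset

/-- closed form for the optimal solution of the (expected-kernel)
class-dependent temperature quadratic program with diagonal kernel `K̄ = diag(N_i² ξ_i)`. -/
theorem stmt6 (c : ℕ) (hc : 2 ≤ c) (N ξ δ : Fin c → ℝ)
    (hN : ∀ i, 0 < N i) (hξ : ∀ i, 0 < ξ i) (hδ : ∀ i, 0 < δ i) :
    let Δ : ℝ := ∑ j, δ j ^ 2
    let obj : (Fin c → Fin c → ℝ) → ℝ := fun α =>
      ∑ y, ∑ i, N i ^ 2 * ξ i * α y i ^ 2
    let feasible : (Fin c → Fin c → ℝ) → Prop := fun α =>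
      ∀ y k : Fin c, k ≠ y →
        1 ≤ (∑ i, (α y i / δ y - α k i / δ k) * (if i = y then N y ^ 2 * ξ y else 0)) / N y
    let αstar : Fin c → Fin c → ℝ := fun y i =>
      δ i / (N i * ξ i) * ((if i = y then (1 : ℝ) else 0) - δ y * δ i / Δ)
    feasible αstar ∧ ∀ α, feasible α → obj αstar ≤ obj α := by
  intro Δ obj feasible αstar
  have hΔval : Δ = ∑ j, δ j ^ 2 := rfl
  clear_value Δ
  have hΔ : 0 < Δ := hΔval ▸ Finset.sum_pos (fun j _ => pow_pos (hδ j) 2)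
    ⟨⟨0, by omega⟩, Finset.mem_univ _⟩
  have hΔne : Δ ≠ 0 := ne_of_gt hΔ
  have hNne : ∀ i, N i ≠ 0 := fun i => ne_of_gt (hN i)
  have hξne : ∀ i, ξ i ≠ 0 := fun i => ne_of_gt (hξ i)
  have hδne : ∀ i, δ i ≠ 0 := fun i => ne_of_gt (hδ i)
  -- simplify the constraint sum
  have hsum : ∀ (α : Fin c → Fin c → ℝ) (y k : Fin c),
      (∑ i, (α y i / δ y - α k i / δ k) * (if i = y then N y ^ 2 * ξ y else 0)) / N y
      = (α y y / δ y - α k y / δ k) * (N y * ξ y) := by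
    intro α y k
    have : (∑ i, (α y i / δ y - α k i / δ k) * (if i = y then N y ^ 2 * ξ y else 0))
        = (α y y / δ y - α k y / δ k) * (N y ^ 2 * ξ y) := by
      rw [Finset.sum_eq_single y]
      · simp
      · intro b _ hb; simp [hb]
      · intro h; exact absurd (Finset.mem_univ y) h
    rw [this]
    have h4 := hNne y
    field_simp
  have hfeas : feasible αstar := by
    intro y k hk
    rw [hsum]
    have hyk : ¬ (y = k) := fun h => hk h.symm
    have : (αstar y y / δ y - αstar k y / δ k) * (N y * ξ y) = 1 := by
      simp only [αstar, eq_self_iff_true, if_true, if_neg hyk]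
      have h1 := hδne y; have h2 := hδne k; have h4 := hNne y; have h5 := hξne y
      field_simp
      ring
    rw [this]
  refine ⟨hfeas, ?_⟩
  intro α hα
  -- gradient term
  set G : ℝ := ∑ y, ∑ i, 2 * (N i ^ 2 * ξ i) * αstar y i * (α y i - αstar y i) with hGdef
  have h1 : obj αstar + G ≤ obj α := by
    have hterm : ∀ y i : Fin c,
        N i ^ 2 * ξ i * αstar y i ^ 2 + 2 * (N i ^ 2 * ξ i) * αstar y i * (α y i - αstar y i)
          ≤ N i ^ 2 * ξ i * α y i ^ 2 := by
      intro y i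
      nlinarith [mul_nonneg (mul_nonneg (sq_nonneg (N i)) (le_of_lt (hξ i)))
        (sq_nonneg (α y i - αstar y i))]
    calc obj αstar + G
        = ∑ y, ∑ i, (N i ^ 2 * ξ i * αstar y i ^ 2
            + 2 * (N i ^ 2 * ξ i) * αstar y i * (α y i - αstar y i)) := by
          simp only [obj, hGdef, ← Finset.sum_add_distrib]
      _ ≤ ∑ y, ∑ i, N i ^ 2 * ξ i * α y i ^ 2 := by
          exact Finset.sum_le_sum fun y _ => Finset.sum_le_sum fun i _ => hterm y i
      _ = obj α := rfl
  have hG : 0 ≤ G := by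
    rw [hGdef, Finset.sum_comm]
    apply Finset.sum_nonneg
    intro i _
    -- inner sum over y
    have hsplit : ∑ y, 2 * (N i ^ 2 * ξ i) * αstar y i * (α y i - αstar y i)
        = (2 * (N i ^ 2 * ξ i) * αstar i i * (α i i - αstar i i))
          + ∑ y ∈ Finset.univ.erase i,
              2 * (N i ^ 2 * ξ i) * αstar y i * (α y i - αstar y i) :=
      (Finset.add_sum_erase Finset.univ _ (Finset.mem_univ i)).symm
    have hΔsplit : Δ = δ i ^ 2 + ∑ y ∈ Finset.univ.erase i, δ y ^ 2 :=
      hΔval.trans (Finset.add_sum_erase Finset.univ (fun j => δ j ^ 2) (Finset.mem_univ i)).symm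
    have hTi : 2 * (N i ^ 2 * ξ i) * αstar i i * (α i i - αstar i i)
        = ∑ y ∈ Finset.univ.erase i,
            (2 * N i * δ i * (α i i - αstar i i) / Δ) * δ y ^ 2 := by
      rw [← Finset.mul_sum]
      have hs : ∑ y ∈ Finset.univ.erase i, δ y ^ 2 = Δ - δ i ^ 2 := by
        rw [hΔsplit]; ring
      rw [hs]
      simp only [αstar, eq_self_iff_true, if_true]
      have h1 := hδne i; have h4 := hNne i; have h5 := hξne i
      field_simp
    rw [hsplit, hTi, ← Finset.sum_add_distrib]
    apply Finset.sum_nonneg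
    intro y hy
    have hyi : y ≠ i := Finset.ne_of_mem_erase hy
    have hiy : ¬ (i = y) := fun h => hyi h.symm
    have hslack : 0 ≤ (α i i / δ i - α y i / δ y) * (N i * ξ i) - 1 := by
      have := hα i y hyi
      rw [hsum] at this
      linarith
    have hid : (2 * N i * δ i * (α i i - αstar i i) / Δ) * δ y ^ 2
        + 2 * (N i ^ 2 * ξ i) * αstar y i * (α y i - αstar y i)
        = (2 * δ i ^ 2 * δ y ^ 2 / (Δ * ξ i))
            * ((α i i / δ i - α y i / δ y) * (N i * ξ i) - 1) := by
      simp only [αstar, eq_self_iff_true, if_true, if_neg hiy]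
      have h1 := hδne i; have h2 := hδne y; have h4 := hNne i; have h5 := hξne i
      field_simp
      ring
    rw [hid]
    exact mul_nonneg (div_nonneg (by positivity) (le_of_lt (mul_pos hΔ (hξ i)))) hslack
  linarith
end

section
/- Let s_y, s_k, N_y, N_k > 0 with N_y ≤ N_k and s_y ≤ s_k. Then Q((s_y+s_k)/(2√(1/N_y + 1/N_k))) ≤ Q(1/√(1/(s_y² N_y) + 1/(s_k² N_k))), with equality when s_y = s_k, where Q is the standard Gaussian tail function. -/
open ProbabilityTheory

/-- for `0 < s_y ≤ s_k` and `0 < N_y ≤ N_k`,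
`Q((s_y+s_k)/(2√(1/N_y+1/N_k))) ≤ Q(1/√(1/(s_y²N_y)+1/(s_k²N_k)))`, with equality when
`s_y = s_k`, where `Q` is the standard Gaussian tail function. -/
theorem stmt11 (sy sk Ny Nk : ℝ) (hsy : 0 < sy) (hsk : 0 < sk) (hNy : 0 < Ny)
    (hNk : 0 < Nk) (hN : Ny ≤ Nk) (hs : sy ≤ sk) :
    let Q : ℝ → ℝ := fun t => (gaussianReal 0 1 (Set.Ioi t)).toReal
    Q ((sy + sk) / (2 * Real.sqrt (1 / Ny + 1 / Nk))) ≤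
        Q (1 / Real.sqrt (1 / (sy ^ 2 * Ny) + 1 / (sk ^ 2 * Nk))) ∧
      (sy = sk → Q ((sy + sk) / (2 * Real.sqrt (1 / Ny + 1 / Nk))) =
        Q (1 / Real.sqrt (1 / (sy ^ 2 * Ny) + 1 / (sk ^ 2 * Nk)))) := by
  intro Q
  have hQmono : ∀ a b : ℝ, a ≤ b → Q b ≤ Q a := fun a b hab =>
    ENNReal.toReal_mono (MeasureTheory.measure_ne_top _ _)
      (MeasureTheory.measure_mono (Set.Ioi_subset_Ioi hab))
  have hA : (0:ℝ) < 1 / Ny + 1 / Nk := by positivity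
  have hB : (0:ℝ) < 1 / (sy ^ 2 * Ny) + 1 / (sk ^ 2 * Nk) := by positivity
  have hsA : 0 < Real.sqrt (1 / Ny + 1 / Nk) := Real.sqrt_pos.mpr hA
  have hsB : 0 < Real.sqrt (1 / (sy ^ 2 * Ny) + 1 / (sk ^ 2 * Nk)) := Real.sqrt_pos.mpr hB
  have key : 1 / Real.sqrt (1 / (sy ^ 2 * Ny) + 1 / (sk ^ 2 * Nk)) ≤
      (sy + sk) / (2 * Real.sqrt (1 / Ny + 1 / Nk)) := by
    rw [div_le_div_iff₀ hsB (by positivity), one_mul]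
    have h1 : 2 * Real.sqrt (1 / Ny + 1 / Nk) = Real.sqrt (4 * (1 / Ny + 1 / Nk)) := by
      rw [show (4:ℝ) = 2^2 by norm_num, Real.sqrt_mul (by positivity), Real.sqrt_sq (by norm_num)]
    have h2 : (sy + sk) * Real.sqrt (1 / (sy ^ 2 * Ny) + 1 / (sk ^ 2 * Nk)) =
        Real.sqrt ((sy + sk)^2 * (1 / (sy ^ 2 * Ny) + 1 / (sk ^ 2 * Nk))) := by
      rw [Real.sqrt_mul (by positivity), Real.sqrt_sq (by positivity)]
    rw [h1, h2]
    apply Real.sqrt_le_sqrt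
    rw [div_add_div _ _ (ne_of_gt hNy) (ne_of_gt hNk),
        div_add_div _ _ (by positivity : sy ^ 2 * Ny ≠ 0) (by positivity : sk ^ 2 * Nk ≠ 0)]
    rw [← mul_div_assoc, ← mul_div_assoc, div_le_div_iff₀ (by positivity) (by positivity)]
    nlinarith [mul_nonneg (mul_nonneg (mul_nonneg (sub_nonneg.2 hs) (sub_nonneg.2 hN))
        (sq_nonneg sk)) (by positivity : (0:ℝ) ≤ sk + 3 * sy),
      mul_nonneg (mul_nonneg hNy.le (sq_nonneg (sk - sy)))
        (by positivity : (0:ℝ) ≤ sk ^ 2 + 4 * sk * sy + sy ^ 2),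
      mul_pos hNy hNk, mul_pos hsy hsk]
  refine ⟨hQmono _ _ key, fun hse => ?_⟩
  subst hse
  have h3 : 1 / (sy ^ 2 * Ny) + 1 / (sy ^ 2 * Nk) = (1 / Ny + 1 / Nk) / sy ^ 2 := by
    field_simp
  have harg : (sy + sy) / (2 * Real.sqrt (1 / Ny + 1 / Nk)) =
      1 / Real.sqrt (1 / (sy ^ 2 * Ny) + 1 / (sy ^ 2 * Nk)) := by
    rw [h3, Real.sqrt_div hA.le, Real.sqrt_sq hsy.le, one_div_div]
    field_simp
    ring
  rw [harg]
end

section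
/- In binary classification (c = 2) with linearly separable data {(x_i, y_i)}, y_i ∈ {1,2}, the CDT predictor (W solving: minimize ‖w_1‖² + ‖w_2‖² subject to (w_{y_i}/δ_{y_i} − w_{k}/δ_{k})ᵀ x_i ≥ 1 for all i and k ≠ y_i, with δ_1, δ_2 > 0) satisfies w_1/‖w_1‖ = ŵ_1/‖ŵ_1‖ and w_2/‖w_2‖ = ŵ_2/‖ŵ_2‖, where (ŵ_1, ŵ_2) is the standard maximum-margin predictor (the case δ_1 = δ_2 = 1). In particular the choice of δ_1, δ_2 has no effect on the direction of the binary CDT classifier. -/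
set_option maxHeartbeats 1000000

open RealInnerProductSpace

lemma stmt13_sq_mid {E : Type*} [NormedAddCommGroup E] [InnerProductSpace ℝ E]
    (a b : E) : ‖(2:ℝ)⁻¹ • (a + b)‖ ^ 2 = (‖a‖^2 + 2*⟪a,b⟫ + ‖b‖^2) / 4 := by
  rw [norm_smul, mul_pow, ← norm_add_sq_real]
  norm_num
  ring

lemma stmt13_uniq {E : Type*} [NormedAddCommGroup E] [InnerProductSpace ℝ E]
    {n : ℕ} (x : Fin n → E) (y : Fin n → Fin 2) (c : Fin 2 → ℝ)
    {v v' : Fin 2 → E}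
    (hF : ∀ i k, k ≠ y i → 1 ≤ ⟪c (y i) • v (y i) - c k • v k, x i⟫)
    (hF' : ∀ i k, k ≠ y i → 1 ≤ ⟪c (y i) • v' (y i) - c k • v' k, x i⟫)
    (hopt : ∀ u : Fin 2 → E, (∀ i k, k ≠ y i → 1 ≤ ⟪c (y i) • u (y i) - c k • u k, x i⟫) →
      ‖v 0‖ ^ 2 + ‖v 1‖ ^ 2 ≤ ‖u 0‖ ^ 2 + ‖u 1‖ ^ 2)
    (hopt' : ∀ u : Fin 2 → E, (∀ i k, k ≠ y i → 1 ≤ ⟪c (y i) • u (y i) - c k • u k, x i⟫) →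
      ‖v' 0‖ ^ 2 + ‖v' 1‖ ^ 2 ≤ ‖u 0‖ ^ 2 + ‖u 1‖ ^ 2) :
    v 0 = v' 0 ∧ v 1 = v' 1 := by
  set m : Fin 2 → E := fun j => (2:ℝ)⁻¹ • (v j + v' j) with hm
  have hFm : ∀ i k, k ≠ y i → 1 ≤ ⟪c (y i) • m (y i) - c k • m k, x i⟫ := by
    intro i k hk
    have h1 := hF i k hk
    have h2 := hF' i k hk
    have key : c (y i) • m (y i) - c k • m k
        = (2:ℝ)⁻¹ • ((c (y i) • v (y i) - c k • v k) + (c (y i) • v' (y i) - c k • v' k)) := by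
      simp only [hm]; module
    rw [key, real_inner_smul_left, inner_add_left]
    linarith
  have h1 := hopt m hFm
  have he : ‖v 0‖^2 + ‖v 1‖^2 = ‖v' 0‖^2 + ‖v' 1‖^2 :=
    le_antisymm (hopt v' hF') (hopt' v hF)
  have e0 : ‖m 0‖^2 = (‖v 0‖^2 + 2*⟪v 0, v' 0⟫ + ‖v' 0‖^2) / 4 := stmt13_sq_mid _ _
  have e1 : ‖m 1‖^2 = (‖v 1‖^2 + 2*⟪v 1, v' 1⟫ + ‖v' 1‖^2) / 4 := stmt13_sq_mid _ _
  have s0 : ‖v 0 - v' 0‖^2 = ‖v 0‖^2 - 2*⟪v 0, v' 0⟫ + ‖v' 0‖^2 := by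
    rw [norm_sub_sq_real]
  have s1 : ‖v 1 - v' 1‖^2 = ‖v 1‖^2 - 2*⟪v 1, v' 1⟫ + ‖v' 1‖^2 := by
    rw [norm_sub_sq_real]
  have hz0 : ‖v 0 - v' 0‖^2 ≤ 0 := by nlinarith [sq_nonneg ‖v 1 - v' 1‖]
  have hz1 : ‖v 1 - v' 1‖^2 ≤ 0 := by nlinarith [sq_nonneg ‖v 0 - v' 0‖]
  constructor
  · have : ‖v 0 - v' 0‖ = 0 := by nlinarith [norm_nonneg (v 0 - v' 0)]
    rw [norm_eq_zero, sub_eq_zero] at this; exact this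
  · have : ‖v 1 - v' 1‖ = 0 := by nlinarith [norm_nonneg (v 1 - v' 1)]
    rw [norm_eq_zero, sub_eq_zero] at this; exact this

lemma stmt13_pairfeas {E : Type*} [NormedAddCommGroup E] [InnerProductSpace ℝ E]
    {n : ℕ} (x : Fin n → E) (y : Fin n → Fin 2) (c : Fin 2 → ℝ) (r s : ℝ) (p : E)
    (hrs : c 0 * r - c 1 * s = 1)
    (hp0 : ∀ i, y i = 0 → 1 ≤ ⟪p, x i⟫)
    (hp1 : ∀ i, y i = 1 → 1 ≤ ⟪-p, x i⟫) :
    ∀ i k, k ≠ y i →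
      1 ≤ ⟪c (y i) • (![r • p, s • p]) (y i) - c k • (![r • p, s • p]) k, x i⟫ := by
  have h2 : ∀ a b : Fin 2, a ≠ b → a = 0 ∧ b = 1 ∨ a = 1 ∧ b = 0 := by decide
  intro i k hk
  rcases h2 (y i) k (Ne.symm hk) with ⟨hy, hk2⟩ | ⟨hy, hk2⟩
  · rw [hy, hk2]
    simp only [Matrix.cons_val_zero, Matrix.cons_val_one, Matrix.head_cons]
    rw [smul_smul, smul_smul, ← sub_smul, hrs, one_smul]
    exact hp0 i hy
  · rw [hy, hk2]
    simp only [Matrix.cons_val_zero, Matrix.cons_val_one, Matrix.head_cons]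
    have hrs' : c 1 * s - c 0 * r = -1 := by linarith
    rw [smul_smul, smul_smul, ← sub_smul, hrs', neg_one_smul]
    exact hp1 i hy

lemma stmt13_pairnorm {E : Type*} [NormedAddCommGroup E] [InnerProductSpace ℝ E]
    (r s : ℝ) (p : E) :
    ‖(![r • p, s • p]) 0‖^2 + ‖(![r • p, s • p]) 1‖^2 = (r^2 + s^2) * ‖p‖^2 := by
  simp only [Matrix.cons_val_zero, Matrix.cons_val_one, Matrix.head_cons]
  rw [norm_smul, norm_smul, mul_pow, mul_pow, Real.norm_eq_abs, Real.norm_eq_abs,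
    sq_abs, sq_abs]
  ring

lemma stmt13_dir {E : Type*} [NormedAddCommGroup E] [InnerProductSpace ℝ E]
    {c d : ℝ} (hc : 0 < c) (hd : 0 < d) (p : E) :
    ‖c • p‖⁻¹ • (c • p) = ‖d • p‖⁻¹ • (d • p) := by
  rcases eq_or_ne p 0 with h | h
  · simp [h]
  · have hp : ‖p‖ ≠ 0 := norm_ne_zero_iff.mpr h
    rw [norm_smul, norm_smul, Real.norm_eq_abs, Real.norm_eq_abs, abs_of_pos hc,
      abs_of_pos hd, smul_smul, smul_smul]
    congr 1
    field_simp

/-- in binary classification with linearly separable data, the CDT predictor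
(with any positive temperatures `δ₁, δ₂`) has the same direction, per class, as the
standard maximum-margin predictor (`δ₁ = δ₂ = 1`). -/
theorem stmt13 (dim n : ℕ) (x : Fin n → EuclideanSpace ℝ (Fin dim)) (y : Fin n → Fin 2)
    (δ : Fin 2 → ℝ) (hδ : ∀ j, 0 < δ j)
    (w wm : Fin 2 → EuclideanSpace ℝ (Fin dim))
    (hsep : ∃ v : Fin 2 → EuclideanSpace ℝ (Fin dim),
      ∀ i, ∀ k, k ≠ y i → 1 ≤ ⟪v (y i) - v k, x i⟫)
    (hwfeas : ∀ i, ∀ k, k ≠ y i →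
      1 ≤ ⟪(δ (y i))⁻¹ • w (y i) - (δ k)⁻¹ • w k, x i⟫)
    (hwopt : ∀ v : Fin 2 → EuclideanSpace ℝ (Fin dim),
      (∀ i, ∀ k, k ≠ y i → 1 ≤ ⟪(δ (y i))⁻¹ • v (y i) - (δ k)⁻¹ • v k, x i⟫) →
      ‖w 0‖ ^ 2 + ‖w 1‖ ^ 2 ≤ ‖v 0‖ ^ 2 + ‖v 1‖ ^ 2)
    (hwmfeas : ∀ i, ∀ k, k ≠ y i → 1 ≤ ⟪wm (y i) - wm k, x i⟫)
    (hwmopt : ∀ v : Fin 2 → EuclideanSpace ℝ (Fin dim),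
      (∀ i, ∀ k, k ≠ y i → 1 ≤ ⟪v (y i) - v k, x i⟫) →
      ‖wm 0‖ ^ 2 + ‖wm 1‖ ^ 2 ≤ ‖v 0‖ ^ 2 + ‖v 1‖ ^ 2) :
    (‖w 0‖)⁻¹ • w 0 = (‖wm 0‖)⁻¹ • wm 0 ∧ (‖w 1‖)⁻¹ • w 1 = (‖wm 1‖)⁻¹ • wm 1 := by
  have hd0 : (0:ℝ) < (δ 0)⁻¹ := inv_pos.mpr (hδ 0)
  have hd1 : (0:ℝ) < (δ 1)⁻¹ := inv_pos.mpr (hδ 1)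
  set u : EuclideanSpace ℝ (Fin dim) := (δ 0)⁻¹ • w 0 - (δ 1)⁻¹ • w 1 with hu
  set um : EuclideanSpace ℝ (Fin dim) := wm 0 - wm 1 with hum
  have hA : (0:ℝ) < (δ 0)⁻¹^2 + (δ 1)⁻¹^2 := by positivity
  set a : ℝ := ((δ 0)⁻¹^2 + (δ 1)⁻¹^2)⁻¹ with ha_def
  have ha : 0 < a := inv_pos.mpr hA
  -- reformulate feasibility in terms of u
  have hu0 : ∀ i, y i = 0 → 1 ≤ ⟪u, x i⟫ := by
    intro i hy
    have hk : (1 : Fin 2) ≠ y i := by rw [hy]; decide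
    have := hwfeas i 1 hk
    rw [hy] at this
    exact this
  have hu1 : ∀ i, y i = 1 → 1 ≤ ⟪-u, x i⟫ := by
    intro i hy
    have hk : (0 : Fin 2) ≠ y i := by rw [hy]; decide
    have := hwfeas i 0 hk
    rw [hy] at this
    rw [hu, neg_sub]
    exact this
  have hum0 : ∀ i, y i = 0 → 1 ≤ ⟪um, x i⟫ := by
    intro i hy
    have hk : (1 : Fin 2) ≠ y i := by rw [hy]; decide
    have := hwmfeas i 1 hk
    rw [hy] at this
    exact this
  have hum1 : ∀ i, y i = 1 → 1 ≤ ⟪-um, x i⟫ := by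
    intro i hy
    have hk : (0 : Fin 2) ≠ y i := by rw [hy]; decide
    have := hwmfeas i 0 hk
    rw [hy] at this
    rw [hum, neg_sub]
    exact this
  -- the scalar identities
  have hrsCDT : (δ 0)⁻¹ * (a * (δ 0)⁻¹) - (δ 1)⁻¹ * (-(a * (δ 1)⁻¹)) = 1 := by
    have h : (δ 0)⁻¹ * (a * (δ 0)⁻¹) - (δ 1)⁻¹ * (-(a * (δ 1)⁻¹))
        = a * ((δ 0)⁻¹^2 + (δ 1)⁻¹^2) := by ring
    rw [h, ha_def, inv_mul_cancel₀ hA.ne']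
  have hsqCDT : (a * (δ 0)⁻¹)^2 + (-(a * (δ 1)⁻¹))^2 = a := by
    have h : (a * (δ 0)⁻¹)^2 + (-(a * (δ 1)⁻¹))^2
        = a * (a * ((δ 0)⁻¹^2 + (δ 1)⁻¹^2)) := by ring
    rw [h, ha_def, inv_mul_cancel₀ hA.ne', mul_one, ← ha_def]
  -- the CDT comparison: a * ‖u‖^2 ≤ obj w
  have exp_u : ‖u‖^2 = (δ 0)⁻¹^2 * ‖w 0‖^2 - 2*((δ 0)⁻¹*(δ 1)⁻¹)*⟪w 0, w 1⟫
      + (δ 1)⁻¹^2 * ‖w 1‖^2 := by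
    rw [hu, norm_sub_sq_real, norm_smul, norm_smul, real_inner_smul_left,
      real_inner_smul_right, Real.norm_eq_abs, Real.norm_eq_abs, abs_of_pos hd0,
      abs_of_pos hd1]
    ring
  have exp_plus : ‖(δ 1)⁻¹ • w 0 + (δ 0)⁻¹ • w 1‖^2
      = (δ 1)⁻¹^2 * ‖w 0‖^2 + 2*((δ 0)⁻¹*(δ 1)⁻¹)*⟪w 0, w 1⟫ + (δ 0)⁻¹^2 * ‖w 1‖^2 := by
    rw [norm_add_sq_real, norm_smul, norm_smul, real_inner_smul_left,
      real_inner_smul_right, Real.norm_eq_abs, Real.norm_eq_abs, abs_of_pos hd0,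
      abs_of_pos hd1]
    ring
  have hkey : ‖u‖^2 ≤ ((δ 0)⁻¹^2 + (δ 1)⁻¹^2) * (‖w 0‖^2 + ‖w 1‖^2) := by
    nlinarith [sq_nonneg ‖(δ 1)⁻¹ • w 0 + (δ 0)⁻¹ • w 1‖]
  have hlower : a * ‖u‖^2 ≤ ‖w 0‖^2 + ‖w 1‖^2 := by
    have h1 : a * ‖u‖^2 ≤ a * (((δ 0)⁻¹^2 + (δ 1)⁻¹^2) * (‖w 0‖^2 + ‖w 1‖^2)) :=
      mul_le_mul_of_nonneg_left hkey ha.le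
    have h2 : a * (((δ 0)⁻¹^2 + (δ 1)⁻¹^2) * (‖w 0‖^2 + ‖w 1‖^2)) = ‖w 0‖^2 + ‖w 1‖^2 := by
      rw [ha_def, ← mul_assoc, inv_mul_cancel₀ hA.ne', one_mul]
    linarith
  -- candidate for CDT from u
  set wc : Fin 2 → EuclideanSpace ℝ (Fin dim) := ![(a * (δ 0)⁻¹) • u, (-(a * (δ 1)⁻¹)) • u] with hwc
  have hwcfeas : ∀ i k, k ≠ y i →
      1 ≤ ⟪(δ (y i))⁻¹ • wc (y i) - (δ k)⁻¹ • wc k, x i⟫ :=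
    stmt13_pairfeas x y (fun j => (δ j)⁻¹) _ _ u hrsCDT hu0 hu1
  have hwcobj : ‖wc 0‖^2 + ‖wc 1‖^2 = a * ‖u‖^2 := by
    rw [hwc, stmt13_pairnorm, hsqCDT]
  have hwcopt : ∀ v : Fin 2 → EuclideanSpace ℝ (Fin dim),
      (∀ i k, k ≠ y i → 1 ≤ ⟪(δ (y i))⁻¹ • v (y i) - (δ k)⁻¹ • v k, x i⟫) →
      ‖wc 0‖^2 + ‖wc 1‖^2 ≤ ‖v 0‖^2 + ‖v 1‖^2 := by
    intro v hv
    rw [hwcobj]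
    exact le_trans hlower (hwopt v hv)
  have hweq := stmt13_uniq x y (fun j => (δ j)⁻¹) hwfeas hwcfeas hwopt hwcopt
  have hw0 : w 0 = (a * (δ 0)⁻¹) • u := by
    rw [hweq.1, hwc]; simp
  have hw1 : w 1 = (-(a * (δ 1)⁻¹)) • u := by
    rw [hweq.2, hwc]; simp
  have hobjw : ‖w 0‖^2 + ‖w 1‖^2 = a * ‖u‖^2 := by
    rw [hweq.1, hweq.2, hwcobj]
  -- candidate for max-margin from um
  set wmc : Fin 2 → EuclideanSpace ℝ (Fin dim) := ![(2:ℝ)⁻¹ • um, (-(2:ℝ)⁻¹) • um] with hwmc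
  have hrs1 : (fun _ : Fin 2 => (1:ℝ)) 0 * (2:ℝ)⁻¹ - (fun _ : Fin 2 => (1:ℝ)) 1 * (-(2:ℝ)⁻¹) = 1 := by
    norm_num
  have hwmcfeas1 := stmt13_pairfeas x y (fun _ => (1:ℝ)) (2:ℝ)⁻¹ (-(2:ℝ)⁻¹) um hrs1 hum0 hum1
  have hwmcfeas : ∀ i k, k ≠ y i → 1 ≤ ⟪wmc (y i) - wmc k, x i⟫ := by
    intro i k hk
    have := hwmcfeas1 i k hk
    simp only [one_smul] at this
    exact this
  have hwmcobj : ‖wmc 0‖^2 + ‖wmc 1‖^2 = ‖um‖^2 / 2 := by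
    rw [hwmc, stmt13_pairnorm]
    norm_num
    ring
  have humle : ‖um‖^2 / 2 ≤ ‖wm 0‖^2 + ‖wm 1‖^2 := by
    have h1 : ‖um‖^2 = ‖wm 0‖^2 - 2*⟪wm 0, wm 1⟫ + ‖wm 1‖^2 := by
      rw [hum, norm_sub_sq_real]
    nlinarith [sq_nonneg ‖wm 0 + wm 1‖, norm_add_sq_real (wm 0) (wm 1)]
  have hwmcopt : ∀ v : Fin 2 → EuclideanSpace ℝ (Fin dim),
      (∀ i k, k ≠ y i → 1 ≤ ⟪v (y i) - v k, x i⟫) →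
      ‖wmc 0‖^2 + ‖wmc 1‖^2 ≤ ‖v 0‖^2 + ‖v 1‖^2 := by
    intro v hv
    rw [hwmcobj]
    exact le_trans humle (hwmopt v hv)
  -- reformulate margin problem with c = 1 to apply uniqueness
  have conv : ∀ v : Fin 2 → EuclideanSpace ℝ (Fin dim),
      (∀ i k, k ≠ y i → 1 ≤ ⟪v (y i) - v k, x i⟫) ↔
      (∀ i k, k ≠ y i →
        1 ≤ ⟪(fun _ : Fin 2 => (1:ℝ)) (y i) • v (y i) - (fun _ : Fin 2 => (1:ℝ)) k • v k, x i⟫) := by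
    intro v
    simp
  have hwmeq := stmt13_uniq x y (fun _ => (1:ℝ)) ((conv wm).mp hwmfeas) ((conv wmc).mp hwmcfeas)
    (fun v hv => hwmopt v ((conv v).mpr hv)) (fun v hv => hwmcopt v ((conv v).mpr hv))
  have hobjwm : ‖wm 0‖^2 + ‖wm 1‖^2 = ‖um‖^2 / 2 := by
    rw [hwmeq.1, hwmeq.2, hwmcobj]
  -- cross comparisons: ‖u‖ = ‖um‖
  set v1 : Fin 2 → EuclideanSpace ℝ (Fin dim) := ![(2:ℝ)⁻¹ • u, (-(2:ℝ)⁻¹) • u] with hv1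
  have hv1feas1 := stmt13_pairfeas x y (fun _ => (1:ℝ)) (2:ℝ)⁻¹ (-(2:ℝ)⁻¹) u hrs1 hu0 hu1
  have hv1feas : ∀ i k, k ≠ y i → 1 ≤ ⟪v1 (y i) - v1 k, x i⟫ := by
    intro i k hk
    have := hv1feas1 i k hk
    simp only [one_smul] at this
    exact this
  have hv1obj : ‖v1 0‖^2 + ‖v1 1‖^2 = ‖u‖^2 / 2 := by
    rw [hv1, stmt13_pairnorm]
    norm_num
    ring
  have humu : ‖um‖^2 / 2 ≤ ‖u‖^2 / 2 := by
    have := hwmopt v1 hv1feas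
    rw [hobjwm, hv1obj] at this
    exact this
  set v2 : Fin 2 → EuclideanSpace ℝ (Fin dim) := ![(a * (δ 0)⁻¹) • um, (-(a * (δ 1)⁻¹)) • um] with hv2
  have hv2feas : ∀ i k, k ≠ y i →
      1 ≤ ⟪(δ (y i))⁻¹ • v2 (y i) - (δ k)⁻¹ • v2 k, x i⟫ :=
    stmt13_pairfeas x y (fun j => (δ j)⁻¹) _ _ um hrsCDT hum0 hum1
  have hv2obj : ‖v2 0‖^2 + ‖v2 1‖^2 = a * ‖um‖^2 := by
    rw [hv2, stmt13_pairnorm, hsqCDT]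
  have huum : a * ‖u‖^2 ≤ a * ‖um‖^2 := by
    have := hwopt v2 hv2feas
    rw [hobjw, hv2obj] at this
    exact this
  have hnorm_eq : ‖u‖^2 = ‖um‖^2 := by
    have h1 : ‖u‖^2 ≤ ‖um‖^2 := le_of_mul_le_mul_left (by linarith) ha
    linarith
  -- v1 is optimal for the margin problem, so wm = v1
  have hv1opt : ∀ v : Fin 2 → EuclideanSpace ℝ (Fin dim),
      (∀ i k, k ≠ y i → 1 ≤ ⟪v (y i) - v k, x i⟫) →
      ‖v1 0‖^2 + ‖v1 1‖^2 ≤ ‖v 0‖^2 + ‖v 1‖^2 := by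
    intro v hv
    rw [hv1obj, hnorm_eq, ← hobjwm]
    exact hwmopt v hv
  have hwmv1 := stmt13_uniq x y (fun _ => (1:ℝ)) ((conv wm).mp hwmfeas) ((conv v1).mp hv1feas)
    (fun v hv => hwmopt v ((conv v).mpr hv)) (fun v hv => hv1opt v ((conv v).mpr hv))
  have hwm0 : wm 0 = (2:ℝ)⁻¹ • u := by
    rw [hwmv1.1, hv1]; simp
  have hwm1 : wm 1 = (-(2:ℝ)⁻¹) • u := by
    rw [hwmv1.2, hv1]; simp
  -- conclude
  have hc0 : (0:ℝ) < a * (δ 0)⁻¹ := by positivity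
  have hc1 : (0:ℝ) < a * (δ 1)⁻¹ := by positivity
  have h2pos : (0:ℝ) < (2:ℝ)⁻¹ := by norm_num
  constructor
  · rw [hw0, hwm0]
    exact stmt13_dir hc0 h2pos u
  · rw [hw1, hwm1]
    have e1 : (-(a * (δ 1)⁻¹)) • u = (a * (δ 1)⁻¹) • (-u) := by
      rw [neg_smul, smul_neg]
    have e2 : (-(2:ℝ)⁻¹) • u = (2:ℝ)⁻¹ • (-u) := by
      rw [neg_smul, smul_neg]
    rw [e1, e2]
    exact stmt13_dir hc1 h2pos (-u)
end
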